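/- The set 𝒯_{𝔥,k} of trees of minimal order with height exactly k satisfies the recursion 𝒯_{𝔥,k} = {[τ]_l : τ ∈ 𝒯_{𝔥,k−1}, l ≥ 1} for k ≥ 2, and the minimal order of a tree with height k equals k/2. -/

import Mathlib

inductive CTree (m : ℕ) : Type
  | node : Fin (m + 1) → List (CTree m) → CTree m

namespace CTree

variable {m : ℕ}

def rho : CTree m → ℚ
  | .node l ts => (if (l : ℕ) = 0 then 1 else 1/2) + (ts.attach.map (fun t => rho t.1)).sum
decreasing_by
  all_goals try simp only [CTree.node.sizeOf_spec, List.cons.sizeOf_spec, List.nil.sizeOf_spec]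
  all_goals try have := List.sizeOf_lt_of_mem t.2
  all_goals omega

def height : CTree m → ℕ
  | .node _ ts => 1 + (ts.attach.map (fun t => height t.1)).foldr max 0
decreasing_by
  all_goals try simp only [CTree.node.sizeOf_spec, List.cons.sizeOf_spec, List.nil.sizeOf_spec]
  all_goals try have := List.sizeOf_lt_of_mem t.2
  all_goals omega

def ram : CTree m → ℕ
  | .node _ [] => 1
  | .node _ [t] => ram t
  | .node _ ts => 1 + (ts.attach.map (fun t => ram t.1)).foldr max 0
decreasing_by
  all_goals try simp only [CTree.node.sizeOf_spec, List.cons.sizeOf_spec, List.nil.sizeOf_spec]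
  all_goals try have := List.sizeOf_lt_of_mem t.2
  all_goals omega

def dbl : CTree m → ℕ
  | .node _ [] => 1
  | .node _ ts =>
      let ds := ts.attach.map (fun t => dbl t.1)
      let M := ds.foldr max 0
      if 2 ≤ ds.count M then M + 1 else M
decreasing_by
  all_goals try simp only [CTree.node.sizeOf_spec, List.cons.sizeOf_spec, List.nil.sizeOf_spec]
  all_goals try have := List.sizeOf_lt_of_mem t.2
  all_goals omega


end CTree

/-! Each node has weight at least 1/2 and a tree of height k has a root-to-leaf path of k nodes,
so `2 * rho τ ≥ height τ`. Equality holds exactly for a single path of stochastic nodes, i.e. for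
`[σ]_l` with `l ≥ 1` and `σ` extremal of height `k - 1`; such paths exist as soon as `m ≥ 1`. -/

namespace CTree

variable {m : ℕ}

lemma rho_node (l : Fin (m + 1)) (ts : List (CTree m)) :
    rho (node l ts) = (if (l : ℕ) = 0 then 1 else 1 / 2) + (ts.map rho).sum := by
  rw [rho, List.attach_map_val]

lemma height_node (l : Fin (m + 1)) (ts : List (CTree m)) :
    height (node l ts) = 1 + (ts.map height).foldr max 0 := by
  rw [height, List.attach_map_val]

@[simp]
lemma height_node_nil (l : Fin (m + 1)) : height (node l ([] : List (CTree m))) = 1 := by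
  simp [height_node]

@[simp]
lemma height_node_singleton (l : Fin (m + 1)) (σ : CTree m) :
    height (node l [σ]) = height σ + 1 := by
  simp [height_node, Nat.add_comm]

lemma exists_mem_height_node_eq {l : Fin (m + 1)} {ts : List (CTree m)} (hts : ts ≠ []) :
    ∃ t ∈ ts, height (node l ts) = height t + 1 := by
  have hmem : (ts.map height).foldr max 0 ∈ ts.map height :=
    List.maximum_mem (List.foldr_max_of_ne_nil (by simpa using hts)).symm
  obtain ⟨t, ht, heq⟩ := List.mem_map.mp hmem
  exact ⟨t, ht, by rw [height_node, ← heq, Nat.add_comm]⟩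

lemma half_le_weight (l : Fin (m + 1)) : (1 / 2 : ℚ) ≤ if (l : ℕ) = 0 then 1 else 1 / 2 := by
  split_ifs <;> norm_num

theorem half_le_rho : ∀ τ : CTree m, (1 / 2 : ℚ) ≤ rho τ
  | .node l ts => by
    have hsum : 0 ≤ (ts.map rho).sum :=
      List.sum_nonneg fun _ hx ↦ by
        obtain ⟨t, ht, rfl⟩ := List.mem_map.mp hx
        linarith [half_le_rho t]
    rw [rho_node]
    linarith [half_le_weight l]
decreasing_by
  simp only [node.sizeOf_spec]
  have := List.sizeOf_lt_of_mem ht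
  omega

lemma rho_add_le_sum_rho {t : CTree m} {ts : List (CTree m)} (ht : t ∈ ts) :
    rho t + ((ts.length : ℚ) - 1) / 2 ≤ (ts.map rho).sum := by
  obtain ⟨s, u, rfl⟩ := List.append_of_mem ht
  have hs := (s.map rho).card_nsmul_le_sum (1 / 2) (by simpa using fun t _ ↦ half_le_rho t)
  have hu := (u.map rho).card_nsmul_le_sum (1 / 2) (by simpa using fun t _ ↦ half_le_rho t)
  simp only [List.length_map, nsmul_eq_mul] at hs hu
  simp only [List.map_append, List.map_cons, List.sum_append, List.sum_cons, List.length_append,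
    List.length_cons, Nat.cast_add, Nat.cast_one]
  linarith

theorem height_le_two_rho : ∀ τ : CTree m, (height τ : ℚ) ≤ 2 * rho τ
  | .node l ts => by
    rcases eq_or_ne ts [] with rfl | hts
    · rw [height_node_nil, rho_node, List.map_nil, List.sum_nil]
      push_cast
      linarith [half_le_weight l]
    obtain ⟨t, ht, hheight⟩ := exists_mem_height_node_eq (l := l) hts
    have ih := height_le_two_rho t
    have hsum := rho_add_le_sum_rho ht
    have hlen : (1 : ℚ) ≤ ts.length := by exact_mod_cast List.length_pos_of_mem ht
    rw [hheight, rho_node]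
    push_cast
    linarith [half_le_weight l]
decreasing_by
  simp only [node.sizeOf_spec]
  have := List.sizeOf_lt_of_mem ht
  omega

lemma rho_node_eq_half_height_iff {l : Fin (m + 1)} {ts : List (CTree m)} (hts : ts ≠ []) :
    rho (node l ts) = height (node l ts) / 2 ↔
      1 ≤ (l : ℕ) ∧ ∃ σ, ts = [σ] ∧ rho σ = height σ / 2 := by
  constructor
  · intro heq
    obtain ⟨t, ht, hheight⟩ := exists_mem_height_node_eq (l := l) hts
    have hsum := rho_add_le_sum_rho ht
    have hlen : (1 : ℚ) ≤ ts.length := by exact_mod_cast List.length_pos_of_mem ht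
    have ht_le := height_le_two_rho t
    rw [hheight, rho_node] at heq
    push_cast at heq
    have hl : (l : ℕ) ≠ 0 := by
      intro hl0
      rw [if_pos hl0] at heq
      linarith
    rw [if_neg hl] at heq
    obtain ⟨σ, rfl⟩ : ∃ σ, ts = [σ] := by
      refine List.length_eq_one_iff.mp (by exact_mod_cast (show (ts.length : ℚ) = 1 by linarith))
    obtain rfl : t = σ := List.mem_singleton.mp ht
    exact ⟨Nat.one_le_iff_ne_zero.mpr hl, t, rfl, by linarith⟩
  · rintro ⟨hl, σ, rfl, hσ⟩
    rw [rho_node, if_neg (by omega), height_node_singleton]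
    simp only [List.map_cons, List.map_nil, List.sum_cons, List.sum_nil, hσ]
    push_cast
    ring

def stalk (l : Fin (m + 1)) : ℕ → CTree m
  | 0 => node l []
  | n + 1 => node l [stalk l n]

@[simp]
lemma height_stalk (l : Fin (m + 1)) (n : ℕ) : height (stalk l n) = n + 1 := by
  induction n with
  | zero => simp [stalk]
  | succ n ih => simp [stalk, ih]

lemma rho_stalk {l : Fin (m + 1)} (hl : 1 ≤ (l : ℕ)) (n : ℕ) :
    rho (stalk l n) = height (stalk l n) / 2 := by
  induction n with
  | zero =>
    rw [stalk, rho_node, if_neg (by omega), height_node_nil, List.map_nil, List.sum_nil]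
    norm_num
  | succ n ih => exact (rho_node_eq_half_height_iff (List.cons_ne_nil _ _)).mpr ⟨hl, _, rfl, ih⟩

lemma isLeast_rho_of_height_eq (hm : 1 ≤ m) {k : ℕ} (hk : 1 ≤ k) :
    IsLeast {r : ℚ | ∃ τ : CTree m, height τ = k ∧ rho τ = r} ((k : ℚ) / 2) := by
  refine ⟨⟨stalk (Fin.last m) (k - 1), by simp; omega, ?_⟩, ?_⟩
  · rw [rho_stalk (by simpa using hm), height_stalk, Nat.sub_add_cancel hk]
  · rintro _ ⟨τ, rfl, rfl⟩
    linarith [height_le_two_rho τ]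

lemma minimal_iff_rho_eq_half_height (hm : 1 ≤ m) {k : ℕ} (hk : 1 ≤ k) (τ : CTree m) :
    (height τ = k ∧ ∀ σ : CTree m, height σ = k → rho τ ≤ rho σ) ↔
      height τ = k ∧ rho τ = height τ / 2 := by
  obtain ⟨⟨σ₀, hσ₀, hρσ₀⟩, hlower⟩ := isLeast_rho_of_height_eq hm hk
  constructor
  · rintro ⟨rfl, hmin⟩
    exact ⟨rfl, le_antisymm (hρσ₀ ▸ hmin σ₀ hσ₀) (hlower ⟨τ, rfl, rfl⟩)⟩
  · rintro ⟨rfl, hρ⟩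
    exact ⟨rfl, fun σ hσ ↦ hρ ▸ hlower ⟨σ, hσ, rfl⟩⟩

end CTree

open CTree in
theorem stmt6 (m k : ℕ) (hm : 1 ≤ m) (hk : 2 ≤ k) :
    ({τ : CTree m | height τ = k ∧ ∀ σ : CTree m, height σ = k → rho τ ≤ rho σ}
      = {τ : CTree m | ∃ (l : Fin (m+1)) (σ : CTree m), 1 ≤ (l : ℕ) ∧
          (height σ = k - 1 ∧ ∀ σ' : CTree m, height σ' = k - 1 → rho σ ≤ rho σ') ∧ τ = .node l [σ]})
    ∧ IsLeast {r : ℚ | ∃ τ : CTree m, height τ = k ∧ rho τ = r} ((k : ℚ) / 2) := by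
  refine ⟨?_, isLeast_rho_of_height_eq hm (by omega)⟩
  ext τ
  simp only [Set.mem_ofPred_eq, minimal_iff_rho_eq_half_height hm (by omega : 1 ≤ k),
    minimal_iff_rho_eq_half_height hm (by omega : 1 ≤ k - 1)]
  constructor
  · rintro ⟨hτ, hρ⟩
    obtain ⟨l, ts⟩ := τ
    have hts : ts ≠ [] := by
      rintro rfl
      simp at hτ
      omega
    obtain ⟨hl, σ, rfl, hσ⟩ := (rho_node_eq_half_height_iff hts).mp hρ
    simp only [height_node_singleton] at hτ
    exact ⟨l, σ, hl, ⟨by omega, hσ⟩, rfl⟩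
  · rintro ⟨l, σ, hl, ⟨hσ, hρσ⟩, rfl⟩
    refine ⟨by simp; omega, ?_⟩
    exact (rho_node_eq_half_height_iff (List.cons_ne_nil _ _)).mpr ⟨hl, σ, rfl, hρσ⟩
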